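/- (Deterministic LASSO oracle inequality.) Let y = Xβ₀ + ε with X ∈ ℝ^{n×p}, let X̃ ∈ ℝ^{n×p} be any surrogate design matrix, and let λ > 0. Let β̃ ∈ argmin_{β∈ℝ^p} { (1/(2n))‖y − X̃β‖₂² + λ‖β‖₁ }. Suppose that (a) ‖(1/n)X̃ᵀ(X̃ − X)β₀‖_∞ ≤ λ/4, (b) ‖(1/n)X̃ᵀε‖_∞ ≤ λ/4, and (c) inf over w in 𝒞 ∩ S^{p−1} of (1/n)‖X̃w‖₂² ≥ κ, where T is the support of β₀, |T| = s, and 𝒞 = {w ∈ ℝ^p : ‖w_{T^c}‖₁ ≤ 3‖w_T‖₁}. Then ‖β̃ − β₀‖₂ ≤ 12λ√s / κ. -/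

import Mathlib

/-!
Put `w = β̃ - β₀`. Comparing the objective at `β̃` and at `β₀` gives the basic inequality
`‖X̃w‖²/(2n) ≤ ⟨X̃ᵀ(y - X̃β₀)/n, w⟩ + λ(‖β₀‖₁ - ‖β̃‖₁)`. Since `y - X̃β₀ = ε - (X̃ - X)β₀`,
conditions (a) and (b) bound the inner product by `λ‖w‖₁/2`, and since `β₀` vanishes off `T`
the `ℓ₁` difference is at most `λ(‖w_T‖₁ - ‖w_{Tᶜ}‖₁)`. Hence `w ∈ 𝒞` and
`‖X̃w‖²/n ≤ 3λ‖w_T‖₁ ≤ 3λ√s‖w‖₂`, while by homogeneity condition (c) gives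
`κ‖w‖₂² ≤ ‖X̃w‖²/n`; so even `‖w‖₂ ≤ 3λ√s/κ`.
-/

open Real Matrix
open scoped Finset

section Lasso

variable {m n : Type*} [Fintype m] [Fintype n]

-- `c` plays the role of `1/n`.
noncomputable def lassoObjective (c lam : ℝ) (A : Matrix m n ℝ) (y : m → ℝ) (β : n → ℝ) : ℝ :=
  c / 2 * ∑ i, (y i - (A *ᵥ β) i) ^ 2 + lam * ∑ a, |β a|

def lassoCone [DecidableEq n] (T : Finset n) : Set (n → ℝ) :=
  {w | ∑ a ∈ Tᶜ, |w a| ≤ 3 * ∑ a ∈ T, |w a|}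

theorem smul_mem_lassoCone [DecidableEq n] {T : Finset n} {w : n → ℝ} (hw : w ∈ lassoCone T)
    (t : ℝ) : t • w ∈ lassoCone T := by
  simp only [lassoCone, Set.mem_ofPred_eq, Pi.smul_apply, smul_eq_mul, abs_mul,
    ← Finset.mul_sum] at hw ⊢
  nlinarith [abs_nonneg t]

theorem lasso_basic_inequality {c lam : ℝ} (A : Matrix m n ℝ) (y : m → ℝ) {β₀ β : n → ℝ}
    (hmin : lassoObjective c lam A y β ≤ lassoObjective c lam A y β₀) :
    c / 2 * ∑ i, (A *ᵥ (β - β₀)) i ^ 2 ≤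
      (c • (Aᵀ *ᵥ (y - A *ᵥ β₀))) ⬝ᵥ (β - β₀) + lam * (∑ a, |β₀ a| - ∑ a, |β a|) := by
  set e := y - A *ᵥ β₀
  set v := A *ᵥ (β - β₀)
  have hres : ∀ i, y i - (A *ᵥ β) i = e i - v i := by
    intro i; simp [e, v, mulVec_sub]
  have hexpand : ∑ i, (e i - v i) ^ 2 = ∑ i, e i ^ 2 - 2 * (e ⬝ᵥ v) + ∑ i, v i ^ 2 := by
    simp only [dotProduct, sub_sq, Finset.sum_add_distrib, Finset.sum_sub_distrib,
      Finset.mul_sum, mul_assoc]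
  have hscore : (c • (Aᵀ *ᵥ e)) ⬝ᵥ (β - β₀) = c * (e ⬝ᵥ v) := by
    rw [smul_dotProduct, mulVec_transpose, ← dotProduct_mulVec, smul_eq_mul]
  have hres₀ : ∀ i, y i - (A *ᵥ β₀) i = e i := fun i => rfl
  simp only [lassoObjective, hres, hres₀, hexpand] at hmin
  rw [hscore]
  linarith

theorem dotProduct_le_mul_sum_abs {u : n → ℝ} {r : ℝ} (hu : ∀ a, |u a| ≤ r) (w : n → ℝ) :
    u ⬝ᵥ w ≤ r * ∑ a, |w a| := by
  rw [Finset.mul_sum]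
  refine Finset.sum_le_sum fun a _ => ?_
  calc u a * w a ≤ |u a| * |w a| := by rw [← abs_mul]; exact le_abs_self _
    _ ≤ r * |w a| := mul_le_mul_of_nonneg_right (hu a) (abs_nonneg _)

theorem sum_abs_sub_sum_abs_le [DecidableEq n] {T : Finset n} {β₀ : n → ℝ}
    (hβ₀ : ∀ a ∉ T, β₀ a = 0) (β : n → ℝ) :
    ∑ a, |β₀ a| - ∑ a, |β a| ≤ ∑ a ∈ T, |β a - β₀ a| - ∑ a ∈ Tᶜ, |β a - β₀ a| := by
  have hT : ∑ a ∈ T, (|β₀ a| - |β a|) ≤ ∑ a ∈ T, |β a - β₀ a| :=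
    Finset.sum_le_sum fun a _ => by rw [abs_sub_comm]; exact abs_sub_abs_le_abs_sub _ _
  have hTc₀ : ∑ a ∈ Tᶜ, |β₀ a| = 0 :=
    Finset.sum_eq_zero fun a ha => by rw [hβ₀ a (Finset.mem_compl.mp ha), abs_zero]
  have hTc : ∑ a ∈ Tᶜ, |β a - β₀ a| = ∑ a ∈ Tᶜ, |β a| :=
    Finset.sum_congr rfl fun a ha => by rw [hβ₀ a (Finset.mem_compl.mp ha), sub_zero]
  rw [Finset.sum_sub_distrib] at hT
  rw [← Finset.sum_add_sum_compl T fun a => |β₀ a|, ← Finset.sum_add_sum_compl T fun a => |β a|,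
    hTc₀, hTc]
  linarith

theorem sum_abs_le_sqrt_card_mul_sqrt_sum_sq (T : Finset n) (w : n → ℝ) :
    ∑ a ∈ T, |w a| ≤ √(#T) * √(∑ a, w a ^ 2) := by
  have hT : (∑ a ∈ T, |w a|) ^ 2 ≤ (#T : ℝ) * ∑ a, w a ^ 2 :=
    calc (∑ a ∈ T, |w a|) ^ 2 ≤ #T * ∑ a ∈ T, |w a| ^ 2 := sq_sum_le_card_mul_sum_sq
      _ ≤ #T * ∑ a, w a ^ 2 := by
        simp only [sq_abs]
        exact mul_le_mul_of_nonneg_left (Finset.sum_le_sum_of_subset_of_nonneg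
          (Finset.subset_univ T) fun a _ _ => sq_nonneg (w a)) (Nat.cast_nonneg _)
  rw [← Real.sqrt_mul (Nat.cast_nonneg _)]
  exact Real.le_sqrt_of_sq_le hT

theorem abs_smul_transpose_mulVec_residual_le {c r : ℝ} (A X : Matrix m n ℝ) {β₀ : n → ℝ}
    {ε y : m → ℝ} (hy : y = X *ᵥ β₀ + ε)
    (hbias : ∀ a, |(c • (Aᵀ *ᵥ ((A - X) *ᵥ β₀))) a| ≤ r)
    (hnoise : ∀ a, |(c • (Aᵀ *ᵥ ε)) a| ≤ r) (a : n) :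
    |(c • (Aᵀ *ᵥ (y - A *ᵥ β₀))) a| ≤ 2 * r := by
  have hres : y - A *ᵥ β₀ = ε - (A - X) *ᵥ β₀ := by
    rw [hy, sub_mulVec]; abel
  rw [hres, mulVec_sub, smul_sub, Pi.sub_apply, two_mul]
  exact (abs_sub _ _).trans (add_le_add (hnoise a) (hbias a))

theorem lasso_cone_inequality [DecidableEq n] {c lam : ℝ} (hlam : 0 ≤ lam) (A : Matrix m n ℝ)
    (y : m → ℝ) {T : Finset n} {β₀ β : n → ℝ} (hβ₀ : ∀ a ∉ T, β₀ a = 0)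
    (hmin : lassoObjective c lam A y β ≤ lassoObjective c lam A y β₀)
    (hscore : ∀ a, |(c • (Aᵀ *ᵥ (y - A *ᵥ β₀))) a| ≤ lam / 2) :
    c * ∑ i, (A *ᵥ (β - β₀)) i ^ 2 + lam * ∑ a ∈ Tᶜ, |β a - β₀ a| ≤
      3 * lam * ∑ a ∈ T, |β a - β₀ a| := by
  have hbasic := lasso_basic_inequality A y hmin
  have hholder := dotProduct_le_mul_sum_abs hscore (β - β₀)
  have hgap := mul_le_mul_of_nonneg_left (sum_abs_sub_sum_abs_le hβ₀ β) hlam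
  have hsplit := Finset.sum_add_sum_compl T fun a => |β a - β₀ a|
  simp only [Pi.sub_apply] at hholder
  nlinarith

theorem mul_sum_sq_le_of_unit_sphere [DecidableEq n] {c κ : ℝ} (A : Matrix m n ℝ)
    {T : Finset n} (hRE : ∀ w ∈ lassoCone T, ∑ a, w a ^ 2 = 1 → κ ≤ c * ∑ i, (A *ᵥ w) i ^ 2)
    {w : n → ℝ} (hw : w ∈ lassoCone T) : κ * ∑ a, w a ^ 2 ≤ c * ∑ i, (A *ᵥ w) i ^ 2 := by
  set N := ∑ a, w a ^ 2
  have hN : 0 ≤ N := Finset.sum_nonneg fun a _ => sq_nonneg (w a)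
  rcases hN.eq_or_lt with hN0 | hNpos
  · have hw0 : w = 0 := funext fun a => pow_eq_zero_iff two_ne_zero |>.mp <|
      (Finset.sum_eq_zero_iff_of_nonneg fun a _ => sq_nonneg (w a)).mp hN0.symm a
        (Finset.mem_univ a)
    simp [N, hw0]
  · set t := √N⁻¹
    have ht : t ^ 2 = N⁻¹ := Real.sq_sqrt (inv_nonneg.mpr hN)
    have hunit : ∑ a, (t • w) a ^ 2 = 1 := by
      simp only [Pi.smul_apply, smul_eq_mul, mul_pow, ← Finset.mul_sum, ht]
      exact inv_mul_cancel₀ hNpos.ne'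
    have h := hRE (t • w) (smul_mem_lassoCone hw t) hunit
    simp only [mulVec_smul, Pi.smul_apply, smul_eq_mul, mul_pow, ← Finset.mul_sum, ht] at h
    rw [← le_div_iff₀ hNpos]
    calc κ ≤ c * (N⁻¹ * ∑ i, (A *ᵥ w) i ^ 2) := h
      _ = (c * ∑ i, (A *ᵥ w) i ^ 2) / N := by ring

theorem lasso_error_le [DecidableEq n] {c lam κ : ℝ} (hc : 0 ≤ c) (hlam : 0 < lam) (hκ : 0 < κ)
    (A : Matrix m n ℝ) (y : m → ℝ) {T : Finset n} {β₀ β : n → ℝ} (hβ₀ : ∀ a ∉ T, β₀ a = 0)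
    (hmin : lassoObjective c lam A y β ≤ lassoObjective c lam A y β₀)
    (hscore : ∀ a, |(c • (Aᵀ *ᵥ (y - A *ᵥ β₀))) a| ≤ lam / 2)
    (hRE : ∀ w ∈ lassoCone T, ∑ a, w a ^ 2 = 1 → κ ≤ c * ∑ i, (A *ᵥ w) i ^ 2) :
    √(∑ a, (β a - β₀ a) ^ 2) ≤ 3 * lam * √(#T) / κ := by
  have hcone := lasso_cone_inequality hlam.le A y hβ₀ hmin hscore
  have hpred : 0 ≤ c * ∑ i, (A *ᵥ (β - β₀)) i ^ 2 :=
    mul_nonneg hc (Finset.sum_nonneg fun i _ => sq_nonneg _)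
  have hw : β - β₀ ∈ lassoCone T := by
    show ∑ a ∈ Tᶜ, |β a - β₀ a| ≤ 3 * ∑ a ∈ T, |β a - β₀ a|
    nlinarith
  have hRE' := mul_sum_sq_le_of_unit_sphere A hRE hw
  have hCS := sum_abs_le_sqrt_card_mul_sqrt_sum_sq T (β - β₀)
  simp only [Pi.sub_apply] at hRE' hCS
  set N := √(∑ a, (β a - β₀ a) ^ 2)
  have hN : N ^ 2 = ∑ a, (β a - β₀ a) ^ 2 :=
    Real.sq_sqrt (Finset.sum_nonneg fun a _ => sq_nonneg _)
  have key : κ * N * N ≤ 3 * lam * √(#T) * N :=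
    calc κ * N * N = κ * ∑ a, (β a - β₀ a) ^ 2 := by rw [mul_assoc, ← sq, hN]
      _ ≤ c * ∑ i, (A *ᵥ (β - β₀)) i ^ 2 := hRE'
      _ ≤ 3 * lam * ∑ a ∈ T, |β a - β₀ a| := by
        nlinarith [Finset.sum_nonneg fun a (_ : a ∈ Tᶜ) => abs_nonneg (β a - β₀ a)]
      _ ≤ 3 * lam * √(#T) * N := by rw [mul_assoc _ √_]; gcongr
  rw [le_div_iff₀ hκ]
  rcases (Real.sqrt_nonneg _ : 0 ≤ N).eq_or_lt with hN0 | hNpos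
  · rw [show N = 0 from hN0.symm, zero_mul]; positivity
  · nlinarith

end Lasso

theorem lasso_oracle_inequality_general
    {n p : ℕ}
    (X Xt : Fin n → Fin p → ℝ) (β₀ : Fin p → ℝ) (ε : Fin n → ℝ) (y : Fin n → ℝ)
    (hy : ∀ i, y i = (∑ a, X i a * β₀ a) + ε i)
    (T : Finset (Fin p)) (hT : ∀ a, a ∈ T ↔ β₀ a ≠ 0)
    (s : ℕ) (hs : T.card = s)
    (lam κ : ℝ) (hlam : 0 < lam) (hκ : 0 < κ)
    (βt : Fin p → ℝ)
    (hmin : ∀ β : Fin p → ℝ,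
      (1 / (2 * (n : ℝ))) * (∑ i, (y i - ∑ a, Xt i a * βt a) ^ 2) + lam * ∑ a, |βt a| ≤
        (1 / (2 * (n : ℝ))) * (∑ i, (y i - ∑ a, Xt i a * β a) ^ 2) + lam * ∑ a, |β a|)
    (ha : ∀ a, |(1 / (n : ℝ)) * ∑ i, Xt i a * (∑ b, (Xt i b - X i b) * β₀ b)| ≤ lam / 4)
    (hb : ∀ a, |(1 / (n : ℝ)) * ∑ i, Xt i a * ε i| ≤ lam / 4)
    (hc : ∀ w : Fin p → ℝ, (∑ a ∈ Tᶜ, |w a|) ≤ 3 * ∑ a ∈ T, |w a| →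
      (∑ a, w a ^ 2) = 1 → κ ≤ (1 / (n : ℝ)) * ∑ i, (∑ a, Xt i a * w a) ^ 2) :
    Real.sqrt (∑ a, (βt a - β₀ a) ^ 2) ≤ 12 * lam * Real.sqrt s / κ := by
  have hβ₀ : ∀ a ∉ T, β₀ a = 0 := fun a ha => not_ne_iff.mp (mt (hT a).mpr ha)
  have hmin' : lassoObjective (1 / n) lam Xt y βt ≤ lassoObjective (1 / n) lam Xt y β₀ := by
    have h := hmin β₀
    rwa [show (1 : ℝ) / (2 * n) = 1 / n / 2 by ring] at h
  have hscore := abs_smul_transpose_mulVec_residual_le (c := 1 / n) Xt X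
    (funext hy) ha hb
  have hbound := lasso_error_le (by positivity) hlam hκ Xt y hβ₀ hmin'
    (fun a => (hscore a).trans_eq (by ring)) hc
  calc √(∑ a, (βt a - β₀ a) ^ 2) ≤ 3 * lam * √s / κ := hs ▸ hbound
    _ ≤ 12 * lam * √s / κ := by gcongr; norm_num

/-- **Deterministic LASSO oracle inequality.**
Given `y = Xβ₀ + ε`, a surrogate design matrix `X̃`, and a LASSO minimizer `β̃` with
regularization parameter `λ > 0`, if the two `ℓ∞` conditions and the restricted
eigenvalue condition on the cone `𝒞 = {w : ‖w_{Tᶜ}‖₁ ≤ 3‖w_T‖₁}` hold, then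
`‖β̃ − β₀‖₂ ≤ 12 λ √s / κ`. -/
theorem lasso_oracle_inequality
    {n p : ℕ} (hn : 0 < n)
    (X Xt : Fin n → Fin p → ℝ) (β₀ : Fin p → ℝ) (ε : Fin n → ℝ) (y : Fin n → ℝ)
    (hy : ∀ i, y i = (∑ a, X i a * β₀ a) + ε i)
    (T : Finset (Fin p)) (hT : ∀ a, a ∈ T ↔ β₀ a ≠ 0)
    (s : ℕ) (hs : T.card = s)
    (lam κ : ℝ) (hlam : 0 < lam) (hκ : 0 < κ)
    (βt : Fin p → ℝ)
    (hmin : ∀ β : Fin p → ℝ,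
      (1 / (2 * (n : ℝ))) * (∑ i, (y i - ∑ a, Xt i a * βt a) ^ 2) + lam * ∑ a, |βt a| ≤
        (1 / (2 * (n : ℝ))) * (∑ i, (y i - ∑ a, Xt i a * β a) ^ 2) + lam * ∑ a, |β a|)
    (ha : ∀ a, |(1 / (n : ℝ)) * ∑ i, Xt i a * (∑ b, (Xt i b - X i b) * β₀ b)| ≤ lam / 4)
    (hb : ∀ a, |(1 / (n : ℝ)) * ∑ i, Xt i a * ε i| ≤ lam / 4)
    (hc : ∀ w : Fin p → ℝ, (∑ a ∈ Tᶜ, |w a|) ≤ 3 * ∑ a ∈ T, |w a| →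
      (∑ a, w a ^ 2) = 1 → κ ≤ (1 / (n : ℝ)) * ∑ i, (∑ a, Xt i a * w a) ^ 2) :
    Real.sqrt (∑ a, (βt a - β₀ a) ^ 2) ≤ 12 * lam * Real.sqrt s / κ :=
  lasso_oracle_inequality_general X Xt β₀ ε y hy T hT s hs lam κ hlam hκ βt hmin ha hb hc
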